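/- arXiv:1211.0869 — 5 statements merged into one kernel-verified Lean document; each statement's English description precedes it below -/
import Mathlib

section
/- Let a < b be real numbers, let u, ψ : ℝ → ℝ be continuously differentiable on [a, b], let β : ℝ → ℝ satisfy ψ'(t) = β(t) for all t ∈ [a, b], and suppose the scaled flux is constant: u'(t) + β(t)·u(t) = J for all t ∈ [a, b], where J ∈ ℝ. Then ∫_a^b exp(ψ(t)) dt > 0, and defining the harmonic average β̂ := ( (1/(b−a)) ∫_a^b exp(ψ(t)) dt )⁻¹, one has β̂ · ( exp(ψ(b))·u(b) − exp(ψ(a))·u(a) ) = J·(b−a). -/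
/-! The integrating factor `exp ψ` turns the constant-flux equation `u' + ψ' u = J` into
`(exp ψ · u)' = J · exp ψ`, so by the fundamental theorem of calculus the jump of `exp ψ · u`
over `[a, b]` is `J ∫_a^b exp ψ`. Dividing by the mean of `exp ψ`, which is positive, gives
`J (b - a)`. -/

open Set MeasureTheory

theorem intervalIntegral.integral_eq_sub_of_hasDerivWithinAt_Icc {f f' : ℝ → ℝ} {a b : ℝ}
    (hab : a ≤ b) (hf : ∀ t ∈ Icc a b, HasDerivWithinAt f (f' t) (Icc a b) t)
    (hf' : IntervalIntegrable f' volume a b) :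
    ∫ t in a..b, f' t = f b - f a :=
  integral_eq_sub_of_hasDeriv_right_of_le hab (fun t ht => (hf t ht).continuousWithinAt)
    (fun t ht => (hf t (Ioo_subset_Icc_self ht)).mono_of_mem_nhdsWithin
      (Icc_mem_nhdsGT_of_mem ⟨ht.1.le, ht.2⟩)) hf'

theorem HasDerivWithinAt.exp_mul {ψ u : ℝ → ℝ} {ψ' u' : ℝ} {s : Set ℝ} {t : ℝ}
    (hψ : HasDerivWithinAt ψ ψ' s t) (hu : HasDerivWithinAt u u' s t) :
    HasDerivWithinAt (fun x => Real.exp (ψ x) * u x)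
      ((u' + ψ' * u t) * Real.exp (ψ t)) s t :=
  (hψ.exp.mul hu).congr_deriv (by ring)

theorem intervalIntegrable_exp_of_hasDerivWithinAt {ψ ψ' : ℝ → ℝ} {a b : ℝ} (hab : a ≤ b)
    (hψ : ∀ t ∈ Icc a b, HasDerivWithinAt ψ (ψ' t) (Icc a b) t) :
    IntervalIntegrable (fun t => Real.exp (ψ t)) volume a b := by
  refine ContinuousOn.intervalIntegrable ?_
  rw [uIcc_of_le hab]
  exact Real.continuous_exp.comp_continuousOn fun t ht => (hψ t ht).continuousWithinAt

theorem exp_mul_sub_exp_mul_eq_mul_integral_exp_of_flux_eq {u u' ψ ψ' : ℝ → ℝ} {a b J : ℝ}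
    (hab : a ≤ b)
    (hu : ∀ t ∈ Icc a b, HasDerivWithinAt u (u' t) (Icc a b) t)
    (hψ : ∀ t ∈ Icc a b, HasDerivWithinAt ψ (ψ' t) (Icc a b) t)
    (hflux : ∀ t ∈ Icc a b, u' t + ψ' t * u t = J) :
    Real.exp (ψ b) * u b - Real.exp (ψ a) * u a = J * ∫ t in a..b, Real.exp (ψ t) := by
  have hderiv : ∀ t ∈ Icc a b, HasDerivWithinAt (fun x => Real.exp (ψ x) * u x)
      (J * Real.exp (ψ t)) (Icc a b) t := fun t ht => by
    rw [← hflux t ht]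
    exact (hψ t ht).exp_mul (hu t ht)
  rw [← intervalIntegral.integral_const_mul,
    intervalIntegral.integral_eq_sub_of_hasDerivWithinAt_Icc hab hderiv
      ((intervalIntegrable_exp_of_hasDerivWithinAt hab hψ).const_mul J)]

theorem exp_fitting_harmonic_average_exact_general
    (a b : ℝ) (hab : a < b)
    (u u' ψ ψ' β : ℝ → ℝ) (J : ℝ)
    (hu : ∀ t ∈ Set.Icc a b, HasDerivWithinAt u (u' t) (Set.Icc a b) t)
    (hψ : ∀ t ∈ Set.Icc a b, HasDerivWithinAt ψ (ψ' t) (Set.Icc a b) t)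
    (hβ : ∀ t ∈ Set.Icc a b, ψ' t = β t)
    (hflux : ∀ t ∈ Set.Icc a b, u' t + β t * u t = J) :
    (0 < ∫ t in a..b, Real.exp (ψ t)) ∧
    ((1 / (b - a)) * ∫ t in a..b, Real.exp (ψ t))⁻¹ *
        (Real.exp (ψ b) * u b - Real.exp (ψ a) * u a)
      = J * (b - a) := by
  have hpos : 0 < ∫ t in a..b, Real.exp (ψ t) :=
    intervalIntegral.intervalIntegral_pos_of_pos_on
      (intervalIntegrable_exp_of_hasDerivWithinAt hab.le hψ) (fun t _ => Real.exp_pos _) hab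
  have hjump := exp_mul_sub_exp_mul_eq_mul_integral_exp_of_flux_eq hab.le hu hψ
    fun t ht => hβ t ht ▸ hflux t ht
  refine ⟨hpos, ?_⟩
  rw [hjump]
  field_simp [hpos.ne', (sub_pos.mpr hab).ne']

/-- Exactness of the Scharfetter–Gummel edge flux formula: if the scaled flux
`u' + β·u` is constantly equal to `J` on `[a, b]` and `ψ' = β` on `[a, b]`,
then `∫_a^b exp (ψ t) dt > 0` and, with the harmonic average
`β̂ = ((1/(b-a)) ∫_a^b exp (ψ t) dt)⁻¹`, one has
`β̂ * (exp (ψ b) * u b - exp (ψ a) * u a) = J * (b - a)`. -/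
theorem exp_fitting_harmonic_average_exact
    (a b : ℝ) (hab : a < b)
    (u u' ψ ψ' β : ℝ → ℝ) (J : ℝ)
    (hu : ∀ t ∈ Set.Icc a b, HasDerivWithinAt u (u' t) (Set.Icc a b) t)
    (hu' : ContinuousOn u' (Set.Icc a b))
    (hψ : ∀ t ∈ Set.Icc a b, HasDerivWithinAt ψ (ψ' t) (Set.Icc a b) t)
    (hψ' : ContinuousOn ψ' (Set.Icc a b))
    (hβ : ∀ t ∈ Set.Icc a b, ψ' t = β t)
    (hflux : ∀ t ∈ Set.Icc a b, u' t + β t * u t = J) :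
    (0 < ∫ t in a..b, Real.exp (ψ t)) ∧
    ((1 / (b - a)) * ∫ t in a..b, Real.exp (ψ t))⁻¹ *
        (Real.exp (ψ b) * u b - Real.exp (ψ a) * u a)
      = J * (b - a) :=
  exp_fitting_harmonic_average_exact_general a b hab u u' ψ ψ' β J hu hψ hβ hflux
end

section
/- Let V be a finite-dimensional real inner product space of dimension d ≥ 1, let q : Fin (d+1) → V be an affine basis, let λ_i : V → ℝ be the associated barycentric coordinate functions, and let g_i ∈ V be the gradient of λ_i. Then for every vector c ∈ V and every point x ∈ V, ∑_{0 ≤ i < j ≤ d} ⟨c, q_j − q_i⟩ · ( λ_i(x)·g_j − λ_j(x)·g_i ) = c. -/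
open Finset

/-!
Write `λ i` for `b.coord i`. The summand of the edge `{i, j}` is `G i j + G j i` with
`G i j = (⟪c, b j - b i⟫ * λ i x) • g j`, and `G i i = 0`, so the sum over `i < j` is the full
double sum of `G`. Summing over `i` first, `∑ i, λ i x • (b j - b i) = b j - x` because the
barycentric weights sum to `1` and reproduce `x`; what is left, `∑ j, ⟪c, b j - x⟫ • g j`,
is `c` because pairing it with `v` gives `⟪c, ∑ j, ⟪g j, v⟫ • (b j - x)⟫` and the increments
`⟪g j, v⟫ = λ j (x + v) - λ j x` are the barycentric coordinates of the displacement `v`.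
-/

theorem Finset.sum_filter_lt_add_swap {ι M : Type*} [Fintype ι] [LinearOrder ι]
    [AddCommMonoid M] (G : ι → ι → M) (hG : ∀ i, G i i = 0) :
    ∑ i, ∑ j ∈ univ.filter (fun j => i < j), (G i j + G j i) = ∑ i, ∑ j, G i j := by
  have hswap : ∑ i, ∑ j ∈ univ.filter (fun j => i < j), G j i
      = ∑ i, ∑ j ∈ univ.filter (fun j => j < i), G i j := by
    simp only [sum_filter]
    exact sum_comm
  simp only [sum_add_distrib]
  rw [hswap, ← sum_add_distrib]
  refine sum_congr rfl fun i _ => ?_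
  rw [sum_filter, sum_filter, ← sum_add_distrib]
  refine sum_congr rfl fun j _ => ?_
  rcases lt_trichotomy i j with h | rfl | h
  · simp [h, h.not_gt]
  · simp [hG]
  · simp [h, h.not_gt]

namespace AffineBasis

theorem sum_coord_smul_sub {ι k V : Type*} [Fintype ι] [Ring k] [AddCommGroup V] [Module k V]
    (b : AffineBasis ι k V) (x y : V) : ∑ i, b.coord i y • (b i - x) = y - x := by
  simp only [smul_sub, sum_sub_distrib, b.linear_combination_coord_eq_self, ← sum_smul,
    b.sum_coord_apply_eq_one, one_smul]

section Gradient

variable {ι V : Type*} [Fintype ι] [NormedAddCommGroup V] [InnerProductSpace ℝ V]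
  (b : AffineBasis ι ℝ V) {g : ι → V}

theorem sum_inner_gradient_smul_sub
    (hg : ∀ i, ∀ x y : V, b.coord i y - b.coord i x = inner ℝ (g i) (y - x)) (x v : V) :
    ∑ j, inner ℝ (g j) v • (b j - x) = v := by
  have hinc : ∀ j, inner ℝ (g j) v = b.coord j (x + v) - b.coord j x := fun j => by
    simpa using (hg j x (x + v)).symm
  simp only [hinc, sub_smul, sum_sub_distrib, sum_coord_smul_sub]
  simp

theorem sum_inner_sub_smul_gradient
    (hg : ∀ i, ∀ x y : V, b.coord i y - b.coord i x = inner ℝ (g i) (y - x)) (c x : V) :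
    ∑ j, inner ℝ c (b j - x) • g j = c := by
  refine ext_inner_right ℝ fun v => ?_
  calc inner ℝ (∑ j, inner ℝ c (b j - x) • g j) v
      = inner ℝ c (∑ j, inner ℝ (g j) v • (b j - x)) := by
        simp only [sum_inner, inner_sum, real_inner_smul_left, real_inner_smul_right, mul_comm]
    _ = inner ℝ c v := by rw [b.sum_inner_gradient_smul_sub hg]

end Gradient

end AffineBasis

theorem nedelec_reproduces_constants_general
    {V : Type*} [NormedAddCommGroup V] [InnerProductSpace ℝ V]
    (d : ℕ)
    (b : AffineBasis (Fin (d + 1)) ℝ V)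
    (g : Fin (d + 1) → V)
    (hg : ∀ i, ∀ x y : V, b.coord i y - b.coord i x = inner ℝ (g i) (y - x))
    (c x : V) :
    ∑ i : Fin (d + 1), ∑ j ∈ univ.filter (fun j => i < j),
        (inner ℝ c (b j - b i) : ℝ) • ((b.coord i x) • g j - (b.coord j x) • g i)
      = c := by
  set G : Fin (d + 1) → Fin (d + 1) → V := fun i j => (inner ℝ c (b j - b i) * b.coord i x) • g j
  have hedge : ∀ i j, inner ℝ c (b j - b i) • (b.coord i x • g j - b.coord j x • g i)
      = G i j + G j i := fun i j => by
    simp only [G]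
    rw [← neg_sub (b j) (b i), inner_neg_right]
    module
  have hweights : ∀ j, ∑ i, inner ℝ c (b j - b i) * b.coord i x = inner ℝ c (b j - x) := by
    intro j
    rw [← neg_sub x, ← b.sum_coord_smul_sub (b j) x, inner_neg_right, inner_sum, ← sum_neg_distrib]
    refine sum_congr rfl fun i _ => ?_
    rw [real_inner_smul_right, ← neg_sub (b j), inner_neg_right]
    ring
  calc _ = ∑ i, ∑ j ∈ univ.filter (fun j => i < j), (G i j + G j i) := by simp only [hedge]
    _ = ∑ i, ∑ j, G i j := sum_filter_lt_add_swap G fun i => by simp [G]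
    _ = ∑ j, inner ℝ c (b j - x) • g j := by
        rw [sum_comm]
        simp only [G, ← sum_smul, hweights]
    _ = c := b.sum_inner_sub_smul_gradient hg c x

/-- The lowest-order Nédélec (Whitney edge) expansion reproduces constant
vector fields: for an affine basis `q` of a `d`-dimensional real inner product
space with barycentric coordinates `λ i = b.coord i` and gradients `g i`,
every constant vector `c` satisfies
`∑_{i<j} ⟪c, q j - q i⟫ • (λ_i(x) • g j - λ_j(x) • g i) = c`. -/
theorem nedelec_reproduces_constants
    {V : Type*} [NormedAddCommGroup V] [InnerProductSpace ℝ V]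
    [FiniteDimensional ℝ V]
    (d : ℕ) (hd : 1 ≤ d) (hdim : Module.finrank ℝ V = d)
    (b : AffineBasis (Fin (d + 1)) ℝ V)
    (g : Fin (d + 1) → V)
    (hg : ∀ i, ∀ x y : V, b.coord i y - b.coord i x = inner ℝ (g i) (y - x))
    (c x : V) :
    ∑ i : Fin (d + 1), ∑ j ∈ univ.filter (fun j => i < j),
        (inner ℝ c (b j - b i) : ℝ) • ((b.coord i x) • g j - (b.coord j x) • g i)
      = c :=
  nedelec_reproduces_constants_general d b g hg c x
end

section
/- Let V be a finite-dimensional real inner product space of dimension d ≥ 1, let q : Fin (d+1) → V be an affine basis, let λ_i : V → ℝ be the associated barycentric coordinate functions, and let g_i ∈ V be the gradient of λ_i. Let Φ : V → ℝ be an affine map and let ∇Φ ∈ V be its gradient (the unique vector with Φ(y) − Φ(x) = ⟨∇Φ, y − x⟩ for all x, y ∈ V). Then for every point x ∈ V, ∑_{0 ≤ i < j ≤ d} ( Φ(q_j) − Φ(q_i) ) · ( λ_i(x)·g_j − λ_j(x)·g_i ) = ∇Φ. -/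
/-! Each edge term is `F i j + F j i` for `F i j = (Φ(q j) - Φ(q i)) λ_i(x) g j`, which vanishes on
the diagonal, so the edge sum is the full double sum of `F`. Summing over `i` with `∑ λ_i = 1` and
`∑ λ_i Φ(q i) = Φ(x)` leaves `∑ j (Φ(q j) - Φ(x)) g j`. This is `∇Φ`: taking gradients in
`Φ = ∑ Φ(q j) λ_j` gives `∇Φ = ∑ Φ(q j) g j`, and in `1 = ∑ λ_j` gives `∑ g j = 0`. -/

open Finset

theorem Finset.sum_sum_filter_lt_add_swap {ι M : Type*} [Fintype ι] [LinearOrder ι]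
    [AddCommMonoid M] (f : ι → ι → M) (hf : ∀ i, f i i = 0) :
    ∑ i, ∑ j ∈ univ.filter (fun j => i < j), (f i j + f j i) = ∑ i, ∑ j, f i j := by
  have lower : ∀ i, ∑ j ∈ univ.filter (fun j => ¬ i < j), f i j
      = ∑ j ∈ univ.filter (fun j => j < i), f i j := by
    intro i
    simp only [sum_filter]
    refine sum_congr rfl fun j _ => ?_
    rcases lt_trichotomy i j with h | rfl | h
    · simp [h, h.not_gt]
    · simp [hf]
    · simp [h, h.not_gt]
  have swap : ∑ i, ∑ j ∈ univ.filter (fun j => i < j), f j i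
      = ∑ i, ∑ j ∈ univ.filter (fun j => j < i), f i j :=
    sum_comm' fun i j => by simp
  simp only [sum_add_distrib]
  rw [swap, ← sum_add_distrib]
  exact sum_congr rfl fun i _ => by rw [← lower, sum_filter_add_sum_filter_not]

theorem AffineBasis.sum_coord_mul_apply {ι k V P : Type*} [Fintype ι] [Ring k]
    [AddCommGroup V] [Module k V] [AddTorsor V P] (b : AffineBasis ι k P) (f : P →ᵃ[k] k)
    (q : P) : ∑ i, b.coord i q * f (b i) = f q := by
  have hw := b.sum_coord_apply_eq_one q
  have h := univ.map_affineCombination b (fun i => b.coord i q) hw f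
  rw [b.affineCombination_coord_eq_self, univ.affineCombination_eq_linear_combination _ _ hw] at h
  simpa using h.symm

theorem Finset.sum_sum_sub_smul_smul {ι k M : Type*} [Fintype ι] [CommRing k] [AddCommGroup M]
    [Module k M] (c L : ι → k) (g : ι → M) (hL : ∑ i, L i = 1) :
    ∑ i, ∑ j, (c j - c i) • L i • g j = ∑ j, (c j - ∑ i, L i * c i) • g j := by
  rw [sum_comm]
  refine sum_congr rfl fun j _ => ?_
  have : ∑ i, (c j - c i) * L i = c j - ∑ i, L i * c i := by
    simp only [sub_mul, sum_sub_distrib, mul_comm (c _), ← sum_mul, hL, one_mul]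
  simp only [smul_smul, ← sum_smul, this]

section Gradient

variable {ι V : Type*} [Fintype ι] [NormedAddCommGroup V] [InnerProductSpace ℝ V]
  (b : AffineBasis ι ℝ V) {g : ι → V}

theorem AffineBasis.sum_apply_smul_eq_of_gradient
    (hg : ∀ i, ∀ x y : V, b.coord i y - b.coord i x = inner ℝ (g i) (y - x))
    (f : V →ᵃ[ℝ] ℝ) {v : V} (hf : ∀ x y : V, f y - f x = inner ℝ v (y - x)) :
    ∑ i, f (b i) • g i = v := by
  refine ext_inner_right ℝ fun u => ?_
  calc inner ℝ (∑ i, f (b i) • g i) u = ∑ i, f (b i) * (b.coord i u - b.coord i 0) := by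
        simp only [sum_inner, real_inner_smul_left, hg _ 0 u, sub_zero]
    _ = f u - f 0 := by
        simp only [mul_comm (f _), sub_mul, sum_sub_distrib, b.sum_coord_mul_apply]
    _ = inner ℝ v u := by simpa using hf 0 u

theorem AffineBasis.sum_gradient_coord_eq_zero
    (hg : ∀ i, ∀ x y : V, b.coord i y - b.coord i x = inner ℝ (g i) (y - x)) :
    ∑ i, g i = 0 := by
  simpa using b.sum_apply_smul_eq_of_gradient hg (AffineMap.const ℝ V (1 : ℝ)) (v := 0)
    (by simp)

theorem AffineBasis.sum_sub_smul_eq_of_gradient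
    (hg : ∀ i, ∀ x y : V, b.coord i y - b.coord i x = inner ℝ (g i) (y - x))
    (f : V →ᵃ[ℝ] ℝ) {v : V} (hf : ∀ x y : V, f y - f x = inner ℝ v (y - x)) (x : V) :
    ∑ i, (f (b i) - f x) • g i = v := by
  simp only [sub_smul, sum_sub_distrib, ← smul_sum, b.sum_gradient_coord_eq_zero hg, smul_zero,
    sub_zero, b.sum_apply_smul_eq_of_gradient hg f hf]

end Gradient

theorem nedelec_reproduces_affine_gradient_general
    {V : Type*} [NormedAddCommGroup V] [InnerProductSpace ℝ V]
    (d : ℕ)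
    (b : AffineBasis (Fin (d + 1)) ℝ V)
    (g : Fin (d + 1) → V)
    (hg : ∀ i, ∀ x y : V, b.coord i y - b.coord i x = inner ℝ (g i) (y - x))
    (Φ : V →ᵃ[ℝ] ℝ) (gradPhi : V)
    (hΦ : ∀ x y : V, Φ y - Φ x = inner ℝ gradPhi (y - x))
    (x : V) :
    ∑ i : Fin (d + 1), ∑ j ∈ univ.filter (fun j => i < j),
        (Φ (b j) - Φ (b i)) • ((b.coord i x) • g j - (b.coord j x) • g i)
      = gradPhi := by
  set F : Fin (d + 1) → Fin (d + 1) → V := fun i j => (Φ (b j) - Φ (b i)) • b.coord i x • g j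
  have edge_eq : ∀ i j, (Φ (b j) - Φ (b i)) • (b.coord i x • g j - b.coord j x • g i)
      = F i j + F j i := fun i j => by simp only [F]; module
  calc _ = ∑ i, ∑ j ∈ univ.filter (fun j => i < j), (F i j + F j i) := by simp only [edge_eq]
    _ = ∑ i, ∑ j, F i j := sum_sum_filter_lt_add_swap F fun i => by simp [F]
    _ = ∑ j, (Φ (b j) - ∑ i, b.coord i x * Φ (b i)) • g j :=
        sum_sum_sub_smul_smul _ _ g (b.sum_coord_apply_eq_one x)
    _ = gradPhi := by
        rw [b.sum_coord_mul_apply]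
        exact b.sum_sub_smul_eq_of_gradient hg Φ hΦ x

/-- Commutativity property of the canonical Nédélec interpolation: for an
affine map `Φ` with gradient `∇Φ = gradPhi`, the Nédélec edge expansion with
moments `Φ(q j) - Φ(q i)` reproduces `∇Φ` exactly:
`∑_{i<j} (Φ(q j) - Φ(q i)) • (λ_i(x) • g j - λ_j(x) • g i) = ∇Φ`. -/
theorem nedelec_reproduces_affine_gradient
    {V : Type*} [NormedAddCommGroup V] [InnerProductSpace ℝ V]
    [FiniteDimensional ℝ V]
    (d : ℕ) (hd : 1 ≤ d) (hdim : Module.finrank ℝ V = d)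
    (b : AffineBasis (Fin (d + 1)) ℝ V)
    (g : Fin (d + 1) → V)
    (hg : ∀ i, ∀ x y : V, b.coord i y - b.coord i x = inner ℝ (g i) (y - x))
    (Φ : V →ᵃ[ℝ] ℝ) (gradPhi : V)
    (hΦ : ∀ x y : V, Φ y - Φ x = inner ℝ gradPhi (y - x))
    (x : V) :
    ∑ i : Fin (d + 1), ∑ j ∈ univ.filter (fun j => i < j),
        (Φ (b j) - Φ (b i)) • ((b.coord i x) • g j - (b.coord j x) • g i)
      = gradPhi :=
  nedelec_reproduces_affine_gradient_general d b g hg Φ gradPhi hΦ x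
end

section
/- Let V be a finite-dimensional real inner product space of dimension d ≥ 1, let q : Fin (d+1) → V be an affine basis, let λ_i : V → ℝ be the associated barycentric coordinate functions, and let g_i ∈ V be the gradient of λ_i. Let D : V → V be a symmetric linear map, i.e., ⟨D v, w⟩ = ⟨v, D w⟩ for all v, w ∈ V. Then for all affine maps u, v : V → ℝ with gradients ∇u, ∇v ∈ V, ⟨D ∇u, ∇v⟩ = − ∑_{0 ≤ i < j ≤ d} ⟨D g_i, g_j⟩ · ( u(q_i) − u(q_j) ) · ( v(q_i) − v(q_j) ). -/
/-!
Writing `∇u = ∑ᵢ u(qᵢ) gᵢ` and `∇v = ∑ⱼ v(qⱼ) gⱼ`, the left side becomes `∑ᵢⱼ ωᵢⱼ u(qᵢ) v(qⱼ)`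
with `ωᵢⱼ = ⟪D gᵢ, gⱼ⟫`. The matrix `ω` is symmetric, and its rows sum to zero because
`∑ᵢ gᵢ = 0` (the barycentric coordinates sum to `1`). As for a graph Laplacian, the bilinear
form of such a matrix is `-∑_{i<j} ωᵢⱼ (xᵢ - xⱼ)(yᵢ - yⱼ)`.
-/

open Finset

section EdgeSums

variable {ι R : Type*} [Fintype ι]

theorem Finset.sum_sum_eq_two_mul_sum_sum_lt [LinearOrder ι] [CommRing R] (f : ι → ι → R)
    (hsymm : ∀ i j, f i j = f j i) (hdiag : ∀ i, f i i = 0) :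
    ∑ i, ∑ j, f i j = 2 * ∑ i, ∑ j ∈ univ.filter (fun j => i < j), f i j := by
  have hsplit : ∀ i j, f i j = (if i < j then f i j else 0) + (if j < i then f j i else 0) := by
    intro i j
    rcases lt_trichotomy i j with h | rfl | h
    · simp [h, h.not_gt]
    · simp [hdiag]
    · simp [h, h.not_gt, hsymm i j]
  calc ∑ i, ∑ j, f i j
      = ∑ i, ∑ j, (if i < j then f i j else 0) + ∑ i, ∑ j, (if j < i then f j i else 0) := by
        simp only [← sum_add_distrib]
        exact sum_congr rfl fun i _ => sum_congr rfl fun j _ => hsplit i j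
    _ = 2 * ∑ i, ∑ j ∈ univ.filter (fun j => i < j), f i j := by
        nth_rw 2 [sum_comm]
        simp only [sum_filter]; ring

theorem Finset.sum_sum_mul_sub_mul_sub [CommRing R] (ω : ι → ι → R)
    (hsymm : ∀ i j, ω i j = ω j i) (hrow : ∀ i, ∑ j, ω i j = 0) (x y : ι → R) :
    ∑ i, ∑ j, ω i j * (x i - x j) * (y i - y j) = -2 * ∑ i, ∑ j, ω i j * x i * y j := by
  have hcol : ∀ j, ∑ i, ω i j = 0 := fun j => (sum_congr rfl fun i _ => hsymm i j).trans (hrow j)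
  have hcross : ∑ i, ∑ j, ω i j * (x j * y i) = ∑ i, ∑ j, ω i j * x i * y j := by
    rw [sum_comm]
    exact sum_congr rfl fun j _ => sum_congr rfl fun i _ => by rw [hsymm, mul_assoc]
  have hdiag : ∑ i, ∑ j, ω i j * (x j * y j) = 0 := by
    rw [sum_comm]
    simp only [← sum_mul, hcol, zero_mul, sum_const_zero]
  calc ∑ i, ∑ j, ω i j * (x i - x j) * (y i - y j)
      = ∑ i, (∑ j, ω i j) * (x i * y i) + ∑ i, ∑ j, ω i j * (x j * y j)
        - ∑ i, ∑ j, ω i j * x i * y j - ∑ i, ∑ j, ω i j * (x j * y i) := by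
        simp only [sum_mul, ← sum_add_distrib, ← sum_sub_distrib]
        congr! 2; ring
    _ = -2 * ∑ i, ∑ j, ω i j * x i * y j := by
        simp only [hrow, zero_mul, sum_const_zero, hdiag, hcross]; ring

theorem Finset.sum_sum_mul_mul_eq_neg_sum_lt [LinearOrder ι] {K : Type*} [Field K] [CharZero K]
    (ω : ι → ι → K) (hsymm : ∀ i j, ω i j = ω j i) (hrow : ∀ i, ∑ j, ω i j = 0) (x y : ι → K) :
    ∑ i, ∑ j, ω i j * x i * y j
      = -∑ i, ∑ j ∈ univ.filter (fun j => i < j), ω i j * (x i - x j) * (y i - y j) := by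
  have h := sum_sum_eq_two_mul_sum_sum_lt (fun i j => ω i j * (x i - x j) * (y i - y j))
    (fun i j => by rw [hsymm]; ring) (fun i => by ring)
  rw [sum_sum_mul_sub_mul_sub ω hsymm hrow] at h
  linear_combination (-1/2 : K) * h

end EdgeSums

namespace AffineBasis

theorem sum_coord_smul_apply {ι k V P W : Type*} [Fintype ι] [Ring k] [AddCommGroup V]
    [Module k V] [AddTorsor V P] [AddCommGroup W] [Module k W]
    (b : AffineBasis ι k P) (f : P →ᵃ[k] W) (x : P) :
    ∑ i, b.coord i x • f (b i) = f x := by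
  conv_rhs => rw [← b.affineCombination_coord_eq_self x]
  rw [map_affineCombination _ _ _ (b.sum_coord_apply_eq_one x),
    affineCombination_eq_linear_combination _ _ _ (b.sum_coord_apply_eq_one x)]
  rfl

variable {ι V : Type*} [Fintype ι] [NormedAddCommGroup V] [InnerProductSpace ℝ V]
  (b : AffineBasis ι ℝ V) {g : ι → V}

theorem eq_sum_smul_of_inner_gradient
    (hg : ∀ i, ∀ x y : V, b.coord i y - b.coord i x = inner ℝ (g i) (y - x))
    {w : V →ᵃ[ℝ] ℝ} {gw : V} (hw : ∀ x y : V, w y - w x = inner ℝ gw (y - x)) :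
    gw = ∑ i, w (b i) • g i := by
  refine ext_inner_right ℝ fun z => ?_
  calc inner ℝ gw z = w z - w 0 := by simpa using (hw 0 z).symm
    _ = ∑ i, (b.coord i z - b.coord i 0) * w (b i) := by
        rw [← b.sum_coord_smul_apply w z, ← b.sum_coord_smul_apply w 0, ← sum_sub_distrib]
        simp only [smul_eq_mul, sub_mul]
    _ = inner ℝ (∑ i, w (b i) • g i) z := by
        simp only [sum_inner, real_inner_smul_left, hg, sub_zero, mul_comm]

theorem sum_eq_zero_of_inner_gradient
    (hg : ∀ i, ∀ x y : V, b.coord i y - b.coord i x = inner ℝ (g i) (y - x)) :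
    ∑ i, g i = 0 := by
  -- the constant map `1 = ∑ i, b.coord i` has gradient `0`
  simpa using (b.eq_sum_smul_of_inner_gradient hg (w := AffineMap.const ℝ V (1 : ℝ)) (gw := 0)
    (by simp)).symm

end AffineBasis

theorem diffusion_form_edge_decomposition_general
    {V : Type*} [NormedAddCommGroup V] [InnerProductSpace ℝ V]
    (d : ℕ)
    (b : AffineBasis (Fin (d + 1)) ℝ V)
    (g : Fin (d + 1) → V)
    (hg : ∀ i, ∀ x y : V, b.coord i y - b.coord i x = inner ℝ (g i) (y - x))
    (D : V →ₗ[ℝ] V)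
    (hD : ∀ v w : V, (inner ℝ (D v) w : ℝ) = inner ℝ v (D w))
    (u v : V →ᵃ[ℝ] ℝ) (gu gv : V)
    (hu : ∀ x y : V, u y - u x = inner ℝ gu (y - x))
    (hv : ∀ x y : V, v y - v x = inner ℝ gv (y - x)) :
    (inner ℝ (D gu) gv : ℝ)
      = - ∑ i : Fin (d + 1), ∑ j ∈ univ.filter (fun j => i < j),
          (inner ℝ (D (g i)) (g j) : ℝ) * (u (b i) - u (b j)) * (v (b i) - v (b j)) := by
  have hsymm : ∀ i j, (inner ℝ (D (g i)) (g j) : ℝ) = inner ℝ (D (g j)) (g i) := fun i j => by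
    rw [hD, real_inner_comm]
  have hrow : ∀ i, ∑ j, (inner ℝ (D (g i)) (g j) : ℝ) = 0 := fun i => by
    rw [← inner_sum, b.sum_eq_zero_of_inner_gradient hg, inner_zero_right]
  rw [← sum_sum_mul_mul_eq_neg_sum_lt _ hsymm hrow, b.eq_sum_smul_of_inner_gradient hg hu,
    b.eq_sum_smul_of_inner_gradient hg hv]
  simp only [map_sum, map_smul, sum_inner, real_inner_smul_left]
  simp only [inner_sum, real_inner_smul_right, mul_sum]
  exact sum_congr rfl fun i _ => sum_congr rfl fun j _ => by ring

/-- Edge-difference decomposition of the diffusion bilinear form: for a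
symmetric linear map `D` and affine maps `u`, `v` with gradients `gu`, `gv`,
`⟪D gu, gv⟫ = - ∑_{i<j} ⟪D g_i, g_j⟫ (u(q_i) - u(q_j)) (v(q_i) - v(q_j))`,
where `g i` is the gradient of the barycentric coordinate `b.coord i`. -/
theorem diffusion_form_edge_decomposition
    {V : Type*} [NormedAddCommGroup V] [InnerProductSpace ℝ V]
    [FiniteDimensional ℝ V]
    (d : ℕ) (hd : 1 ≤ d) (hdim : Module.finrank ℝ V = d)
    (b : AffineBasis (Fin (d + 1)) ℝ V)
    (g : Fin (d + 1) → V)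
    (hg : ∀ i, ∀ x y : V, b.coord i y - b.coord i x = inner ℝ (g i) (y - x))
    (D : V →ₗ[ℝ] V)
    (hD : ∀ v w : V, (inner ℝ (D v) w : ℝ) = inner ℝ v (D w))
    (u v : V →ᵃ[ℝ] ℝ) (gu gv : V)
    (hu : ∀ x y : V, u y - u x = inner ℝ gu (y - x))
    (hv : ∀ x y : V, v y - v x = inner ℝ gv (y - x)) :
    (inner ℝ (D gu) gv : ℝ)
      = - ∑ i : Fin (d + 1), ∑ j ∈ univ.filter (fun j => i < j),
          (inner ℝ (D (g i)) (g j) : ℝ) * (u (b i) - u (b j)) * (v (b i) - v (b j)) :=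
  diffusion_form_edge_decomposition_general d b g hg D hD u v gu gv hu hv
end

section
/- Let V be a real normed space, let W be a finite-dimensional linear subspace of V, let a, a_h : V → V → ℝ be bilinear maps, let F : V → ℝ be a linear map, and let c₂ > 0, ε ≥ 0 with ε < c₂, and δ ≥ 0. Assume: (i) for every z ∈ W with z ≠ 0 there exists v ∈ W with v ≠ 0 such that a(z, v) ≥ c₂·‖z‖·‖v‖; (ii) |a(z, v) − a_h(z, v)| ≤ ε·‖z‖·‖v‖ for all z, v ∈ W; and (iii) w ∈ W satisfies |F(v) − a_h(w, v)| ≤ δ·‖v‖ for all v ∈ W. Then there exists a unique u_h ∈ W with a_h(u_h, v) = F(v) for all v ∈ W, and it satisfies ‖w − u_h‖ ≤ δ / (c₂ − ε). -/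
/-!
A perturbation of size `ε` of a form with inf-sup constant `c₂` keeps an inf-sup constant
`c₂ - ε > 0`. An inf-sup constant `γ` bounds `γ ‖z‖` by the dual norm of `b z` on `W`, which
gives injectivity of `z ↦ b z` on `W` (hence bijectivity onto the dual, as `W` is
finite-dimensional) and, applied to the error `w - u_h`, the bound `‖w - u_h‖ ≤ δ / (c₂ - ε)`.
-/

section

variable {V : Type*} [NormedAddCommGroup V] [Module ℝ V]

def InfSupOn (b : V →ₗ[ℝ] V →ₗ[ℝ] ℝ) (W : Submodule ℝ V) (γ : ℝ) : Prop :=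
  ∀ z ∈ W, z ≠ 0 → ∃ v ∈ W, v ≠ 0 ∧ b z v ≥ γ * ‖z‖ * ‖v‖

namespace InfSupOn

variable {a b : V →ₗ[ℝ] V →ₗ[ℝ] ℝ} {W : Submodule ℝ V} {c γ ε δ : ℝ}

theorem of_abs_sub_le (h : InfSupOn a W c)
    (hab : ∀ z ∈ W, ∀ v ∈ W, |a z v - b z v| ≤ ε * ‖z‖ * ‖v‖) : InfSupOn b W (c - ε) := by
  intro z hz hz0
  obtain ⟨v, hv, hv0, hav⟩ := h z hz hz0
  refine ⟨v, hv, hv0, ?_⟩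
  linarith [(abs_le.mp (hab z hz v hv)).2]

theorem norm_le_div (h : InfSupOn b W γ) (hγ : 0 < γ) (hδ : 0 ≤ δ) {z : V} (hz : z ∈ W)
    (hbz : ∀ v ∈ W, b z v ≤ δ * ‖v‖) : ‖z‖ ≤ δ / γ := by
  rcases eq_or_ne z 0 with rfl | hz0
  · simpa using div_nonneg hδ hγ.le
  obtain ⟨v, hv, hv0, hbv⟩ := h z hz hz0
  have hγz : γ * ‖z‖ * ‖v‖ ≤ δ * ‖v‖ := hbv.le.trans (hbz v hv)
  rw [le_div_iff₀' hγ]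
  exact le_of_mul_le_mul_right hγz (norm_pos_iff.mpr hv0)

theorem eq_zero_of_forall_apply_eq_zero (h : InfSupOn b W γ) (hγ : 0 < γ) {z : V} (hz : z ∈ W)
    (hbz : ∀ v ∈ W, b z v = 0) : z = 0 := by
  have := h.norm_le_div hγ le_rfl hz fun v hv => by simp [hbz v hv]
  simpa using this

theorem existsUnique_apply_eq [FiniteDimensional ℝ W] (h : InfSupOn b W γ) (hγ : 0 < γ)
    (F : V →ₗ[ℝ] ℝ) : ∃! u, u ∈ W ∧ ∀ v ∈ W, b u v = F v := by
  set B := b.domRestrict₁₂ W W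
  have hB : Function.Injective B := by
    rw [← LinearMap.ker_eq_bot, LinearMap.ker_eq_bot']
    intro z hBz
    exact Subtype.ext <| h.eq_zero_of_forall_apply_eq_zero hγ z.2 fun v hv =>
      LinearMap.congr_fun hBz ⟨v, hv⟩
  obtain ⟨u, hu⟩ := (B.linearEquivOfInjective hB Subspace.dual_finrank_eq.symm).surjective
    (F.domRestrict W)
  have hsol : ∀ v ∈ W, b u v = F v := fun v hv => LinearMap.congr_fun hu ⟨v, hv⟩
  refine ⟨u, ⟨u.2, hsol⟩, fun u' ⟨hu'W, hu'⟩ => ?_⟩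
  refine sub_eq_zero.mp (h.eq_zero_of_forall_apply_eq_zero hγ (W.sub_mem hu'W u.2) ?_)
  intro v hv
  simp [hu' v hv, hsol v hv]

end InfSupOn

end

theorem combined_solvability_and_error_general
    {V : Type*} [NormedAddCommGroup V] [NormedSpace ℝ V]
    (W : Submodule ℝ V) [FiniteDimensional ℝ W]
    (a ah : V →ₗ[ℝ] V →ₗ[ℝ] ℝ) (F : V →ₗ[ℝ] ℝ)
    (c₂ ε δ : ℝ) (hεc : ε < c₂) (hδ : 0 ≤ δ)
    (hinfsup : ∀ z ∈ W, z ≠ 0 → ∃ v ∈ W, v ≠ 0 ∧ a z v ≥ c₂ * ‖z‖ * ‖v‖)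
    (hpert : ∀ z ∈ W, ∀ v ∈ W, |a z v - ah z v| ≤ ε * ‖z‖ * ‖v‖)
    (w : V) (hwW : w ∈ W)
    (hcons : ∀ v ∈ W, |F v - ah w v| ≤ δ * ‖v‖) :
    (∃! uh : V, uh ∈ W ∧ ∀ v ∈ W, ah uh v = F v) ∧
    (∀ uh : V, uh ∈ W → (∀ v ∈ W, ah uh v = F v) →
      ‖w - uh‖ ≤ δ / (c₂ - ε)) := by
  have hah : InfSupOn ah W (c₂ - ε) := InfSupOn.of_abs_sub_le hinfsup hpert
  have hγ : 0 < c₂ - ε := sub_pos.mpr hεc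
  refine ⟨hah.existsUnique_apply_eq hγ F, fun uh huhW huh => ?_⟩
  refine hah.norm_le_div hγ hδ (W.sub_mem hwW huhW) fun v hv => ?_
  rw [map_sub, LinearMap.sub_apply, huh v hv]
  linarith [(abs_le.mp (hcons v hv)).1]

/-- Combined abstract form of Lemma 3.3 and Theorem 3.4: inf-sup for `a` on a
finite-dimensional subspace `W` with constant `c₂`, a perturbation bound
`|a - a_h| ≤ ε‖·‖‖·‖` on `W` with `ε < c₂`, and a consistency bound `δ` for
`w ∈ W` together yield a unique discrete solution `u_h ∈ W` of
`a_h(u_h, v) = F(v)` on `W`, with the error bound `‖w - u_h‖ ≤ δ / (c₂ - ε)`. -/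
theorem combined_solvability_and_error
    {V : Type*} [NormedAddCommGroup V] [NormedSpace ℝ V]
    (W : Submodule ℝ V) [FiniteDimensional ℝ W]
    (a ah : V →ₗ[ℝ] V →ₗ[ℝ] ℝ) (F : V →ₗ[ℝ] ℝ)
    (c₂ ε δ : ℝ) (hc₂ : 0 < c₂) (hε : 0 ≤ ε) (hεc : ε < c₂) (hδ : 0 ≤ δ)
    (hinfsup : ∀ z ∈ W, z ≠ 0 → ∃ v ∈ W, v ≠ 0 ∧ a z v ≥ c₂ * ‖z‖ * ‖v‖)
    (hpert : ∀ z ∈ W, ∀ v ∈ W, |a z v - ah z v| ≤ ε * ‖z‖ * ‖v‖)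
    (w : V) (hwW : w ∈ W)
    (hcons : ∀ v ∈ W, |F v - ah w v| ≤ δ * ‖v‖) :
    (∃! uh : V, uh ∈ W ∧ ∀ v ∈ W, ah uh v = F v) ∧
    (∀ uh : V, uh ∈ W → (∀ v ∈ W, ah uh v = F v) →
      ‖w - uh‖ ≤ δ / (c₂ - ε)) :=
  combined_solvability_and_error_general W a ah F c₂ ε δ hεc hδ hinfsup hpert w hwW hcons
end
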